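/- Uniform Schwartz decay of frequency-localized Schrödinger kernels: Let χ : ℝ → ℂ be smooth and compactly supported. For t, x ∈ ℝ define K_t(x) = ∫_ℝ e^{i(xξ − tξ²)} χ(ξ) dξ. Then for every N ∈ ℕ there exists a constant C_N (depending only on N and χ) such that |K_t(x)| ≤ C_N · (1 + |x|)^{-N} for all t ∈ [0,1] and all x ∈ ℝ. -/

import Mathlib

/-!
`K_t(x)` is the Fourier transform of `g_t(ξ) = e^{-itξ²} χ(ξ)` at `-x/2π`. Since
`𝓕(g⁽ⁿ⁾)(w) = (2πiw)ⁿ 𝓕g(w)`, this gives `|x|ⁿ |K_t(x)| ≤ ‖∂_ξⁿ g_t‖_{L¹}`.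
As `(t, ξ) ↦ ∂_ξⁿ g_t(ξ)` is continuous and supported in `ℝ × supp χ`, that `L¹` norm
is continuous in `t`, hence bounded on `[0, 1]`. The cases `n = 0` and `n = N` suffice because
`(1 + |x|)ᴺ ≤ 2ᴺ⁻¹ (1 + |x|ᴺ)`.
-/

open Function Real MeasureTheory
open scoped FourierTransform ContDiff

section

variable {E : Type*} [NormedAddCommGroup E] [NormedSpace ℝ E]

theorem contDiff_uncurry_iteratedDeriv {f : ℝ → ℝ → E} (hf : ContDiff ℝ ∞ (uncurry f))
    (n : ℕ) : ContDiff ℝ ∞ (uncurry fun t => iteratedDeriv n (f t)) := by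
  induction n with
  | zero => simpa using hf
  | succ n ih =>
    have hF : ContDiff ℝ ∞ (uncurry fun (p : ℝ × ℝ) => iteratedDeriv n (f p.1)) :=
      ih.comp (contDiff_fst.fst.prodMk contDiff_snd)
    simp only [iteratedDeriv_succ]
    exact (hF.fderiv contDiff_snd le_rfl).clm_apply contDiff_const

theorem support_iteratedDeriv_subset {g : ℝ → E} {K : Set ℝ} (hK : IsClosed K)
    (hg : support g ⊆ K) (n : ℕ) : support (iteratedDeriv n g) ⊆ K := by
  intro x hx
  refine closure_minimal hg hK (support_iteratedFDeriv_subset (𝕜 := ℝ) n ?_)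
  contrapose! hx
  rw [notMem_support] at hx ⊢
  simp [iteratedDeriv_eq_iteratedFDeriv, hx]

theorem exists_bound_integral_norm_iteratedDeriv {f : ℝ → ℝ → E}
    (hf : ContDiff ℝ ∞ (uncurry f)) {S K : Set ℝ} (hS : IsCompact S) (hK : IsCompact K)
    (hsupp : ∀ t, support (f t) ⊆ K) (n : ℕ) :
    ∃ C, ∀ t ∈ S, ∫ ξ, ‖iteratedDeriv n (f t) ξ‖ ≤ C := by
  have hD : Continuous (uncurry fun t ξ => ‖iteratedDeriv n (f t) ξ‖) :=
    (contDiff_uncurry_iteratedDeriv hf n).continuous.norm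
  obtain ⟨C, hC⟩ := hS.bddAbove_image
    (continuous_parametric_integral_of_continuous (μ := volume) hD hK).continuousOn
  refine ⟨C, fun t ht => ?_⟩
  rw [← setIntegral_eq_integral_of_forall_compl_eq_zero fun ξ hξ => by
    rw [norm_eq_zero, ← notMem_support]
    exact fun h => hξ (support_iteratedDeriv_subset hK.isClosed (hsupp t) n h)]
  exact hC ⟨t, ht, rfl⟩

end

section

variable {E : Type*} [NormedAddCommGroup E] [NormedSpace ℂ E]

theorem pow_mul_norm_fourier_le_integral_norm_iteratedDeriv {g : ℝ → E}
    (hg : ContDiff ℝ ∞ g) (hcs : HasCompactSupport g) (n : ℕ) (w : ℝ) :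
    (2 * π * |w|) ^ n * ‖𝓕 g w‖ ≤ ∫ ξ, ‖iteratedDeriv n g ξ‖ := by
  have hint : ∀ k : ℕ, (k : ℕ∞) ≤ ⊤ → Integrable (iteratedDeriv k g) := fun k _ =>
    (hg.continuous_iteratedDeriv k (mod_cast le_top)).integrable_of_hasCompactSupport
      (hcs.mono' (support_iteratedDeriv_subset (isClosed_tsupport g) (subset_tsupport g) k))
  calc (2 * π * |w|) ^ n * ‖𝓕 g w‖
      = ‖𝓕 (iteratedDeriv n g) w‖ := by
        rw [Real.fourier_iteratedDeriv hg hint le_top, norm_smul, norm_pow]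
        simp [abs_of_pos pi_pos]
    _ ≤ ∫ ξ, ‖iteratedDeriv n g ξ‖ :=
      VectorFourier.norm_fourierIntegral_le_integral_norm _ _ _ _ _

theorem exists_bound_pow_mul_norm_fourier {f : ℝ → ℝ → E}
    (hf : ContDiff ℝ ∞ (uncurry f)) {S K : Set ℝ} (hS : IsCompact S) (hK : IsCompact K)
    (hsupp : ∀ t, support (f t) ⊆ K) (n : ℕ) :
    ∃ C, ∀ t ∈ S, ∀ w, (2 * π * |w|) ^ n * ‖𝓕 (f t) w‖ ≤ C := by
  obtain ⟨C, hC⟩ := exists_bound_integral_norm_iteratedDeriv hf hS hK hsupp n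
  refine ⟨C, fun t ht w => le_trans ?_ (hC t ht)⟩
  exact pow_mul_norm_fourier_le_integral_norm_iteratedDeriv
    (hf.comp (contDiff_const.prodMk contDiff_id))
    (hK.of_isClosed_subset (isClosed_tsupport _) (closure_minimal (hsupp t) hK.isClosed)) n w

end

open Complex in
theorem integral_exp_mul_eq_fourier (χ : ℝ → ℂ) (t x : ℝ) :
    ∫ ξ : ℝ, exp (I * ((x : ℂ) * (ξ : ℂ) - (t : ℂ) * (ξ : ℂ) ^ 2)) * χ ξ
      = 𝓕 (fun ξ : ℝ => exp (-(I * t * ξ ^ 2)) * χ ξ) (-(x / (2 * π))) := by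
  rw [fourier_real_eq_integral_exp_smul]
  congr 1 with ξ
  rw [smul_eq_mul, ← mul_assoc, ← Complex.exp_add]
  congr 2
  push_cast
  field_simp
  ring

open Complex in
theorem contDiff_uncurry_exp_mul {χ : ℝ → ℂ} (hχ : ContDiff ℝ ∞ χ) :
    ContDiff ℝ ∞ (uncurry fun t ξ : ℝ => exp (-(I * t * ξ ^ 2)) * χ ξ) := by
  have hofReal : ContDiff ℝ ∞ ((↑) : ℝ → ℂ) := ofRealCLM.contDiff
  exact (ContDiff.cexp (by fun_prop)).mul (hχ.comp contDiff_snd)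

theorem schrodinger_kernel_decay (χ : ℝ → ℂ)
    (hχ : ContDiff ℝ (⊤ : ℕ∞) χ) (hsupp : HasCompactSupport χ) :
    ∀ N : ℕ, ∃ C : ℝ,
      ∀ t ∈ Set.Icc (0 : ℝ) 1, ∀ x : ℝ,
        ‖∫ ξ : ℝ,
            Complex.exp (Complex.I * ((x : ℂ) * (ξ : ℂ) - (t : ℂ) * (ξ : ℂ) ^ 2)) * χ ξ‖
          ≤ C / (1 + |x|) ^ N := by
  intro N
  have hsupp_t (t : ℝ) :
      support (fun ξ : ℝ => Complex.exp (-(Complex.I * t * ξ ^ 2)) * χ ξ) ⊆ tsupport χ :=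
    (support_mul_subset_right _ _).trans (subset_tsupport χ)
  obtain ⟨C₀, hC₀⟩ := exists_bound_pow_mul_norm_fourier (contDiff_uncurry_exp_mul hχ)
    isCompact_Icc hsupp hsupp_t 0
  obtain ⟨C_N, hC_N⟩ := exists_bound_pow_mul_norm_fourier (contDiff_uncurry_exp_mul hχ)
    isCompact_Icc hsupp hsupp_t N
  refine ⟨2 ^ (N - 1) * (C₀ + C_N), fun t ht x => ?_⟩
  have hx : 2 * π * |-(x / (2 * π))| = |x| := by
    rw [abs_neg, abs_div, abs_of_pos two_pi_pos]
    field_simp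
  rw [le_div_iff₀ (by positivity), integral_exp_mul_eq_fourier]
  set A :=
    ‖𝓕 (fun ξ : ℝ => Complex.exp (-(Complex.I * t * ξ ^ 2)) * χ ξ) (-(x / (2 * π)))‖
  have h₀ := hC₀ t ht (-(x / (2 * π)))
  have h_N := hC_N t ht (-(x / (2 * π)))
  rw [hx] at h₀ h_N
  calc A * (1 + |x|) ^ N ≤ A * (2 ^ (N - 1) * (1 ^ N + |x| ^ N)) := by
        gcongr
        exact add_pow_le zero_le_one (abs_nonneg x) N
    _ = 2 ^ (N - 1) * (|x| ^ 0 * A + |x| ^ N * A) := by ring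
    _ ≤ 2 ^ (N - 1) * (C₀ + C_N) := by gcongr
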